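/- Let A be an n×n real matrix (indexed 0,…,n−1) with A(i,i+1) > 0 for 0 ≤ i ≤ n−2, A(i,j) = 0 whenever j > i+1, and A(i,j) ≥ 0 for all i ≠ j. Then the following are equivalent: (1) there exists a diagonal matrix Δ with strictly positive diagonal entries such that Δ A Δ⁻¹ is symmetric; (2) A is tridiagonal (A(i,j) = 0 whenever |i − j| > 1) and A(i+1,i) > 0 for all 0 ≤ i ≤ n−2. -/

import Mathlib

/-!
`Δ A Δ⁻¹` is symmetric iff `A` satisfies detailed balance `w i * A i j = w j * A j i` for the
weights `w = δ ^ 2`. With positive weights, `A i j` and `A j i` then vanish, or are positive,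
together, which mirrors the skip-free pattern above the diagonal to below it. Conversely, for a
tridiagonal `A` detailed balance only couples neighbouring states, and it is solved by the
weights `w (k + 1) = w k * A k (k + 1) / A (k + 1) k`.
-/

open Matrix

namespace Matrix

section DiagonalConjugation

variable {ι K : Type*} [Fintype ι] [DecidableEq ι] [Field K]

theorem inv_diagonal_of_ne_zero {δ : ι → K} (hδ : ∀ i, δ i ≠ 0) :
    (diagonal δ)⁻¹ = diagonal δ⁻¹ := by
  refine inv_eq_right_inv ?_
  rw [diagonal_mul_diagonal, ← diagonal_one]
  exact congrArg diagonal (funext fun i => mul_inv_cancel₀ (hδ i))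

theorem diagonal_mul_mul_inv_diagonal_apply (A : Matrix ι ι K) {δ : ι → K}
    (hδ : ∀ i, δ i ≠ 0) (i j : ι) :
    (diagonal δ * A * (diagonal δ)⁻¹) i j = δ i * A i j / δ j := by
  simp [inv_diagonal_of_ne_zero hδ, diagonal_mul, mul_diagonal, div_eq_mul_inv]

theorem isSymm_diagonal_mul_mul_inv_diagonal_iff (A : Matrix ι ι K) {δ : ι → K}
    (hδ : ∀ i, δ i ≠ 0) :
    (diagonal δ * A * (diagonal δ)⁻¹).IsSymm ↔ ∀ i j, δ i ^ 2 * A i j = δ j ^ 2 * A j i := by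
  simp only [IsSymm.ext_iff, diagonal_mul_mul_inv_diagonal_apply A hδ,
    div_eq_div_iff (hδ _) (hδ _)]
  refine forall_comm.trans (forall₂_congr fun i j => ?_)
  constructor <;> intro h <;> linear_combination h

end DiagonalConjugation

section DetailedBalance

variable {ι K : Type*} [Field K] [LinearOrder K] [IsStrictOrderedRing K] {A : Matrix ι ι K}
  {w : ι → K}

theorem apply_eq_zero_iff_of_balance (hw : ∀ i, 0 < w i)
    (hA : ∀ i j, w i * A i j = w j * A j i) (i j : ι) : A i j = 0 ↔ A j i = 0 := by
  rw [← mul_eq_zero_iff_left (hw i).ne', hA, mul_eq_zero_iff_left (hw j).ne']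

theorem apply_pos_iff_of_balance (hw : ∀ i, 0 < w i)
    (hA : ∀ i j, w i * A i j = w j * A j i) (i j : ι) : 0 < A i j ↔ 0 < A j i := by
  rw [← mul_pos_iff_of_pos_left (hw i), hA, mul_pos_iff_of_pos_left (hw j)]

end DetailedBalance

theorem balance_of_tridiagonal {n : ℕ} {R : Type*} [CommSemiring R] {A : Matrix (Fin n) (Fin n) R}
    {w : Fin n → R} (htri : ∀ i j : Fin n, ((i : ℕ) + 1 < j ∨ (j : ℕ) + 1 < i) → A i j = 0)
    (hadj : ∀ i j : Fin n, (j : ℕ) = i + 1 → w j * A j i = w i * A i j) (i j : Fin n) :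
    w i * A i j = w j * A j i := by
  rcases lt_trichotomy ((i : ℕ) + 1) j with hlt | hij | hgt
  · rw [htri i j (.inl hlt), htri j i (.inr hlt), mul_zero, mul_zero]
  · exact (hadj i j hij.symm).symm
  rcases lt_trichotomy ((j : ℕ) + 1) i with hlt | hji | hle
  · rw [htri i j (.inr hlt), htri j i (.inl hlt), mul_zero, mul_zero]
  · exact hadj j i hji.symm
  · rw [Fin.ext (by omega : (i : ℕ) = j)]

section BirthDeath

variable {n : ℕ} (A : Matrix (Fin n) (Fin n) ℝ)

/-- The ratio `A k (k + 1) / A (k + 1) k`, with the junk value `1` once `k + 1 ≥ n`. -/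
noncomputable def birthDeathRatio (k : ℕ) : ℝ :=
  if h : k + 1 < n then A ⟨k, by omega⟩ ⟨k + 1, h⟩ / A ⟨k + 1, h⟩ ⟨k, by omega⟩ else 1

noncomputable def birthDeathWeight (i : Fin n) : ℝ :=
  ∏ k ∈ Finset.range i, A.birthDeathRatio k

theorem birthDeathRatio_eq {i j : Fin n} (hij : (j : ℕ) = i + 1) :
    A.birthDeathRatio i = A i j / A j i := by
  obtain ⟨j, hj⟩ := j
  subst hij
  rw [birthDeathRatio, dif_pos hj]

theorem birthDeathWeight_pos (hsup : ∀ i j : Fin n, (j : ℕ) = i + 1 → 0 < A i j)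
    (hsub : ∀ i j : Fin n, (i : ℕ) = j + 1 → 0 < A i j) (i : Fin n) :
    0 < A.birthDeathWeight i := by
  refine Finset.prod_pos fun k _ => ?_
  unfold birthDeathRatio
  split_ifs with h
  · exact div_pos (hsup _ _ rfl) (hsub _ _ rfl)
  · exact one_pos

theorem birthDeathWeight_mul_apply_of_succ {i j : Fin n} (hij : (j : ℕ) = i + 1)
    (hji : A j i ≠ 0) : A.birthDeathWeight j * A j i = A.birthDeathWeight i * A i j := by
  rw [birthDeathWeight, hij, Finset.prod_range_succ, ← birthDeathWeight,
    A.birthDeathRatio_eq hij, mul_assoc, div_mul_cancel₀ _ hji]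

end BirthDeath

end Matrix

theorem diag_conj_symm_iff_tridiagonal {n : ℕ} (A : Matrix (Fin n) (Fin n) ℝ)
    (hsup : ∀ i j : Fin n, (j : ℕ) = (i : ℕ) + 1 → 0 < A i j)
    (hupper : ∀ i j : Fin n, (i : ℕ) + 1 < (j : ℕ) → A i j = 0) :
    (∃ δ : Fin n → ℝ, (∀ i, 0 < δ i) ∧
        (Matrix.diagonal δ * A * (Matrix.diagonal δ)⁻¹).IsSymm)
      ↔ ((∀ i j : Fin n, ((i : ℕ) + 1 < (j : ℕ) ∨ (j : ℕ) + 1 < (i : ℕ)) → A i j = 0) ∧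
          (∀ i j : Fin n, (i : ℕ) = (j : ℕ) + 1 → 0 < A i j)) := by
  constructor
  · rintro ⟨δ, hδ, hsymm⟩
    have hbal := (isSymm_diagonal_mul_mul_inv_diagonal_iff A fun i => (hδ i).ne').1 hsymm
    have hw : ∀ i, 0 < δ i ^ 2 := fun i => pow_pos (hδ i) 2
    exact ⟨fun i j hij => hij.elim (hupper i j) fun hji =>
        (apply_eq_zero_iff_of_balance hw hbal i j).2 (hupper j i hji),
      fun i j hij => (apply_pos_iff_of_balance hw hbal i j).2 (hsup j i hij)⟩
  · rintro ⟨htri, hsub⟩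
    have hw := A.birthDeathWeight_pos hsup hsub
    refine ⟨fun i => √(A.birthDeathWeight i), fun i => Real.sqrt_pos.2 (hw i), ?_⟩
    rw [isSymm_diagonal_mul_mul_inv_diagonal_iff A fun i => (Real.sqrt_pos.2 (hw i)).ne']
    simp only [Real.sq_sqrt (hw _).le]
    exact balance_of_tridiagonal htri fun i j hij =>
      A.birthDeathWeight_mul_apply_of_succ hij (hsub j i hij).ne'
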